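/- arXiv:2107.12420 — 2 statements merged into one kernel-verified Lean document; each statement's English description precedes it below -/
import Mathlib

section
/- Let (Ω, ℱ, P) be a probability space, 𝒢 ⊆ ℱ a sub-σ-algebra, Y an integrable random variable, A ∈ ℱ an event with p := P(A | 𝒢) satisfying 0 < p̲ ≤ p ≤ p̄ < 1 a.s., and suppose 1_A is conditionally independent of Y given 𝒢 (unconfoundedness). Then E[ 1_A · Y / p ] = E[Y]; i.e., the inverse-propensity-weighted quantity is unbiased for the mean. -/
open MeasureTheory

/-- IPW unbiasedness: if `p = P(A ∣ 𝒢)` is bounded away from 0 and 1 and `1_A`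
is conditionally independent of `Y` given `𝒢` (i.e.
`E[1_A · Y ∣ 𝒢] = p · E[Y ∣ 𝒢]` a.s.), then `E[1_A · Y / p] = E[Y]`. -/
theorem ipw_unbiased
    {Ω : Type*} (𝒢 : MeasurableSpace Ω) [mΩ : MeasurableSpace Ω] (P : Measure Ω) [IsProbabilityMeasure P]
    (h𝒢 : 𝒢 ≤ mΩ)
    (Y : Ω → ℝ) (hY : Integrable Y P)
    (A : Set Ω) (hA : MeasurableSet A)
    (p : Ω → ℝ) (hp : p = P[A.indicator (fun _ => (1 : ℝ)) | 𝒢])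
    (pl pu : ℝ) (hpl : 0 < pl) (hpu : pu < 1)
    (hbound : ∀ᵐ ω ∂P, pl ≤ p ω ∧ p ω ≤ pu)
    (hindep : P[fun ω => A.indicator (fun _ => (1 : ℝ)) ω * Y ω | 𝒢]
      =ᵐ[P] fun ω => p ω * (P[Y | 𝒢]) ω) :
    ∫ ω, A.indicator (fun _ => (1 : ℝ)) ω * Y ω / p ω ∂P = ∫ ω, Y ω ∂P := by
  set I : Ω → ℝ := A.indicator (fun _ => (1 : ℝ)) with hI
  have hpm : StronglyMeasurable[𝒢] p := hp ▸ stronglyMeasurable_condExp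
  have hIm : @AEStronglyMeasurable _ _ _ mΩ mΩ I P := by
    rw [hI]
    have h1 : Measurable[𝒢] (fun _ : Ω => (1:ℝ)) := measurable_const
    exact (measurable_const.indicator hA).aestronglyMeasurable
  have hg : Integrable (fun ω => I ω * Y ω) P := by
    apply hY.bdd_mul (c := 1) hIm
    refine Filter.Eventually.of_forall fun ω => ?_
    by_cases h : ω ∈ A <;> simp [hI, Set.indicator_apply, h]
  have hfm : StronglyMeasurable[𝒢] (fun ω => (p ω)⁻¹) := (hpm.measurable.inv).stronglyMeasurable
  have hfg : Integrable (fun ω => (p ω)⁻¹ * (I ω * Y ω)) P := by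
    apply Integrable.mono' (hg.norm.const_mul pl⁻¹)
      (((hfm.mono h𝒢).aestronglyMeasurable).mul hg.1)
    filter_upwards [hbound] with ω ⟨h1, _⟩
    simp only [Pi.mul_apply, norm_mul, ← mul_assoc]
    have h2 : ‖(p ω)⁻¹‖ ≤ pl⁻¹ := by
      rw [Real.norm_eq_abs, abs_inv, abs_of_pos (lt_of_lt_of_le hpl h1)]
      exact inv_anti₀ hpl h1
    exact mul_le_mul_of_nonneg_right
      (mul_le_mul_of_nonneg_right h2 (norm_nonneg _)) (norm_nonneg _)
  have hmul : P[(fun ω => (p ω)⁻¹) * (fun ω => I ω * Y ω) | 𝒢]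
      =ᵐ[P] (fun ω => (p ω)⁻¹) * P[(fun ω => I ω * Y ω) | 𝒢] :=
    condExp_mul_of_stronglyMeasurable_left hfm hfg hg
  calc ∫ ω, I ω * Y ω / p ω ∂P
      = ∫ ω, (p ω)⁻¹ * (I ω * Y ω) ∂P := by
        simp only [div_eq_inv_mul]
    _ = ∫ ω, (P[(fun ω => (p ω)⁻¹) * (fun ω => I ω * Y ω) | 𝒢]) ω ∂P :=
        (integral_condExp h𝒢).symm
    _ = ∫ ω, (P[Y | 𝒢]) ω ∂P := by
        apply integral_congr_ae
        filter_upwards [hmul, hindep, hbound] with ω h1 h2 h3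
        have hne : p ω ≠ 0 := (lt_of_lt_of_le hpl h3.1).ne'
        simp only [Pi.mul_apply] at h1
        rw [h1, h2, ← mul_assoc, inv_mul_cancel₀ hne, one_mul]
    _ = ∫ ω, Y ω ∂P := integral_condExp h𝒢
end

section
/- Double robustness identity: with the setup above, let p̂ and m̂ be bounded 𝒢-measurable random variables with p̂ bounded away from 0. If either p̂ = P(A|𝒢) a.s. (propensity correct) or m̂ = E[Y|𝒢] a.s. (outcome model correct), then E[ 1_A·Y/p̂ + (1 − 1_A/p̂)·m̂ ] = E[Y]. -/
open MeasureTheory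

theorem aipw_aux_int_of_bdd {Ω : Type*} {m0 : MeasurableSpace Ω} {P : MeasureTheory.Measure Ω}
    [MeasureTheory.IsFiniteMeasure P] {f : Ω → ℝ} (hf : MeasureTheory.AEStronglyMeasurable f P)
    {C : ℝ} (h : ∀ ω, |f ω| ≤ C) : MeasureTheory.Integrable f P := by
  refine MeasureTheory.Integrable.mono' (MeasureTheory.integrable_const C) hf ?_
  exact MeasureTheory.ae_of_all _ fun ω => by simpa using h ω

/-- Double robustness: with `p̂, m̂` bounded `𝒢`-measurable and `p̂` bounded away
from 0, if either the propensity model is correct (`p̂ = P(A∣𝒢)` a.s.) or the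
outcome model is correct (`m̂ = E[Y∣𝒢]` a.s.), then
`E[1_A·Y/p̂ + (1 − 1_A/p̂)·m̂] = E[Y]`. -/
theorem aipw_doubly_robust
    {Ω : Type*} (𝒢 : MeasurableSpace Ω) [mΩ : MeasurableSpace Ω] (P : Measure Ω) [IsProbabilityMeasure P]
    (h𝒢 : 𝒢 ≤ mΩ)
    (Y : Ω → ℝ) (hY : Integrable Y P) (hYb : ∃ C, ∀ ω, |Y ω| ≤ C)
    (A : Set Ω) (hA : MeasurableSet A)
    (p : Ω → ℝ) (hp : p = P[A.indicator (fun _ => (1 : ℝ)) | 𝒢])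
    (pl pu : ℝ) (hpl : 0 < pl) (hpu : pu < 1)
    (hbound : ∀ᵐ ω ∂P, pl ≤ p ω ∧ p ω ≤ pu)
    (hindep : P[fun ω => A.indicator (fun _ => (1 : ℝ)) ω * Y ω | 𝒢]
      =ᵐ[P] fun ω => p ω * (P[Y | 𝒢]) ω)
    (phat mhat : Ω → ℝ)
    (hphat : Measurable[𝒢] phat) (hmhat : Measurable[𝒢] mhat)
    (δ : ℝ) (hδ : 0 < δ) (hphat_pos : ∀ ω, δ ≤ phat ω)
    (hphat_b : ∃ C, ∀ ω, |phat ω| ≤ C) (hmhat_b : ∃ C, ∀ ω, |mhat ω| ≤ C)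
    (hcorrect : (phat =ᵐ[P] p) ∨ (mhat =ᵐ[P] P[Y | 𝒢])) :
    ∫ ω, A.indicator (fun _ => (1 : ℝ)) ω * Y ω / phat ω
        + (1 - A.indicator (fun _ => (1 : ℝ)) ω / phat ω) * mhat ω ∂P
      = ∫ ω, Y ω ∂P := by
  classical
  set gA : Ω → ℝ := A.indicator (fun _ => (1 : ℝ)) with hgA
  set m : Ω → ℝ := P[Y | 𝒢] with hm
  set q : Ω → ℝ := fun ω => (phat ω)⁻¹ with hq
  have hphat_pos' : ∀ ω, 0 < phat ω := fun ω => lt_of_lt_of_le hδ (hphat_pos ω)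
  have hphat_ne : ∀ ω, phat ω ≠ 0 := fun ω => ne_of_gt (hphat_pos' ω)
  -- measurability facts
  have hgA_meas : Measurable[mΩ] gA :=
    (measurable_const.indicator hA : Measurable[mΩ] gA)
  have hgA_b : ∀ ω, |gA ω| ≤ 1 := by
    intro ω
    by_cases h : ω ∈ A <;> simp [hgA, Set.indicator_apply, h]
  have hgA_int : Integrable gA P :=
    aipw_aux_int_of_bdd (hgA_meas.aestronglyMeasurable (μ := P)) hgA_b
  have hmhat_meas : Measurable[mΩ] mhat := (hmhat.mono h𝒢 le_rfl : Measurable[mΩ] mhat)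
  have hphat_meas : Measurable[mΩ] phat := (hphat.mono h𝒢 le_rfl : Measurable[mΩ] phat)
  have hq_meas : Measurable[𝒢] q := hphat.inv
  have hq_b : ∀ ω, |q ω| ≤ δ⁻¹ := by
    intro ω
    rw [hq, abs_of_pos (inv_pos.2 (hphat_pos' ω))]
    exact inv_anti₀ hδ (hphat_pos ω)
  have hmhat_int : Integrable mhat P := by
    obtain ⟨C, hC⟩ := hmhat_b
    exact aipw_aux_int_of_bdd (hmhat_meas.aestronglyMeasurable (μ := P)) hC
  -- the integrable pieces
  have hf1_int : Integrable (fun ω => gA ω * Y ω) P :=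
    hY.bdd_mul (hgA_meas.aestronglyMeasurable (μ := P)) (c := 1) (ae_of_all _ fun ω => by simpa using hgA_b ω)
  have hf2_int : Integrable (fun ω => mhat ω * gA ω) P := by
    obtain ⟨C, hC⟩ := hmhat_b
    exact hgA_int.bdd_mul (hmhat_meas.aestronglyMeasurable (μ := P)) (c := C) (ae_of_all _ fun ω => by simpa using hC ω)
  set W : Ω → ℝ := (fun ω => gA ω * Y ω) - (fun ω => mhat ω * gA ω) with hW
  have hW_int : Integrable W P := hf1_int.sub hf2_int
  have hqW_int : Integrable (q * W) P :=
    hW_int.bdd_mul ((hq_meas.mono h𝒢 le_rfl : Measurable[mΩ] q).aestronglyMeasurable (μ := P))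
      (c := δ⁻¹) (ae_of_all _ fun ω => by simpa using hq_b ω)
  -- conditional expectation of W
  have hEf2 : P[(fun ω => mhat ω * gA ω) | 𝒢] =ᵐ[P] fun ω => mhat ω * p ω := by
    have := condExp_mul_of_stronglyMeasurable_left (μ := P) (m := 𝒢)
      hmhat.stronglyMeasurable (g := gA) hf2_int hgA_int
    refine this.trans ?_
    rw [hp]
    rfl
  have hEW : P[W | 𝒢] =ᵐ[P] fun ω => p ω * (m ω - mhat ω) := by
    have hsub := condExp_sub (μ := P) (m := 𝒢) hf1_int hf2_int
    refine hsub.trans ?_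
    filter_upwards [hindep, hEf2, hbound] with ω h1 h2 h3
    simp only [Pi.sub_apply, h1, h2]
    ring
  -- ∫ q * W = ∫ q * (p * (m - mhat))
  have hstep : ∫ ω, (q * W) ω ∂P = ∫ ω, q ω * (p ω * (m ω - mhat ω)) ∂P := by
    rw [← integral_condExp (μ := P) h𝒢 (f := q * W)]
    refine integral_congr_ae ?_
    refine (condExp_mul_of_stronglyMeasurable_left (μ := P) (m := 𝒢)
      hq_meas.stronglyMeasurable hqW_int hW_int).trans ?_
    filter_upwards [hEW] with ω hω
    simp only [Pi.mul_apply, hω]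
  -- integrability of the final integrand
  have hp_aesm : @AEStronglyMeasurable Ω ℝ _ mΩ mΩ p P := by
    rw [hp]; exact (stronglyMeasurable_condExp.mono h𝒢).aestronglyMeasurable
  have hpm_int : Integrable (fun ω => p ω * (m ω - mhat ω)) P := by
    refine Integrable.bdd_mul (c := pu) ((integrable_condExp).sub hmhat_int) hp_aesm ?_
    filter_upwards [hbound] with ω hω
    rw [Real.norm_eq_abs, abs_of_pos (lt_of_lt_of_le hpl hω.1)]
    exact hω.2
  have hqpm_int : Integrable (fun ω => q ω * (p ω * (m ω - mhat ω))) P :=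
    hpm_int.bdd_mul ((hq_meas.mono h𝒢 le_rfl : Measurable[mΩ] q).aestronglyMeasurable (μ := P))
      (c := δ⁻¹) (ae_of_all _ fun ω => by simpa using hq_b ω)
  -- final a.e. identification
  have hfinal : (fun ω => q ω * (p ω * (m ω - mhat ω)) + mhat ω) =ᵐ[P] m := by
    rcases hcorrect with hpe | hme
    · filter_upwards [hpe] with ω hω
      rw [hq, ← hω, inv_mul_cancel_left₀ (hphat_ne ω), sub_add_cancel]
    · filter_upwards [hme] with ω hω
      simp [hω]
  -- assemble
  calc ∫ ω, gA ω * Y ω / phat ω + (1 - gA ω / phat ω) * mhat ω ∂P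
      = ∫ ω, ((q * W) ω + mhat ω) ∂P := by
        refine integral_congr_ae (ae_of_all _ fun ω => ?_)
        simp only [Pi.mul_apply, hW, Pi.sub_apply, hq, div_eq_mul_inv]
        ring
    _ = ∫ ω, (q * W) ω ∂P + ∫ ω, mhat ω ∂P := integral_add hqW_int hmhat_int
    _ = ∫ ω, q ω * (p ω * (m ω - mhat ω)) ∂P + ∫ ω, mhat ω ∂P := by rw [hstep]
    _ = ∫ ω, (q ω * (p ω * (m ω - mhat ω)) + mhat ω) ∂P := (integral_add hqpm_int hmhat_int).symm
    _ = ∫ ω, m ω ∂P := integral_congr_ae hfinal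
    _ = ∫ ω, Y ω ∂P := integral_condExp h𝒢 (f := Y)
end
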